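/- Let ω > 1 and set ρ₀ = arcsinh(1/√(ω² − 1)). Then ∫₀^{ρ₀} sinh²ρ · (1 − (ω² − 1) sinh²ρ)^{−1/2} dρ = (ω/(ω² − 1)) · E(1/ω²) − (1/ω) · K(1/ω²). (This evaluates the conserved spin of the folded closed GKP string/stringy membrane, after the overall factor ω, in terms of complete elliptic integrals.) -/

import Mathlib

/-!
Substituting `sinh ρ = cos θ / √(ω² - 1)` maps `θ ∈ [0, π/2]` onto `ρ ∈ [0, ρ₀]` and turns the
integrand into `cos² θ / ((ω² - 1) √(ω² - sin² θ))`. Writing `cos² θ = ω² (1 - sin² θ / ω²) - (ω² - 1)`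
splits this into the integrands of `E(1/ω²)` and `K(1/ω²)`.
-/

noncomputable section

open Real

/-- Complete elliptic integral of the first kind,
K(m) = ∫₀^{π/2} (1 − m sin²θ)^{−1/2} dθ. -/
def ellK (m : ℝ) : ℝ := ∫ θ in (0:ℝ)..(π / 2), (Real.sqrt (1 - m * Real.sin θ ^ 2))⁻¹

/-- Complete elliptic integral of the second kind,
E(m) = ∫₀^{π/2} (1 − m sin²θ)^{1/2} dθ. -/
def ellE (m : ℝ) : ℝ := ∫ θ in (0:ℝ)..(π / 2), Real.sqrt (1 - m * Real.sin θ ^ 2)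


open Set MeasureTheory

lemma hasDerivAt_arsinh_cos_div_sqrt {c : ℝ} (hc : 0 < c) (θ : ℝ) :
    HasDerivAt (fun t => arsinh (cos t / √c)) (-(sin θ / √(c + cos θ ^ 2))) θ := by
  refine ((hasDerivAt_arsinh _).comp θ ((hasDerivAt_cos θ).div_const √c)).congr_deriv ?_
  have hcθ : 0 < c + cos θ ^ 2 := by positivity
  have hsqrt : √(1 + (cos θ / √c) ^ 2) = √(c + cos θ ^ 2) / √c := by
    rw [← sqrt_div hcθ.le, div_pow, sq_sqrt hc.le, one_add_div hc.ne']
  rw [hsqrt]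
  field_simp

/-- The substitution `sinh ρ = cos θ / √c`. -/
lemma integral_zero_arsinh_one_div_sqrt_eq {F : Type*} [NormedAddCommGroup F] [NormedSpace ℝ F]
    {c : ℝ} (hc : 0 < c) (g : ℝ → F) :
    ∫ ρ in (0 : ℝ)..arsinh (1 / √c), g ρ
      = ∫ θ in (0 : ℝ)..π / 2, (sin θ / √(c + cos θ ^ 2)) • g (arsinh (cos θ / √c)) := by
  have key := integral_Icc_deriv_smul_of_deriv_nonpos (g := g) (a := 0) (b := π / 2)
    (f := fun t => arsinh (cos t / √c)) (f' := fun θ => -(sin θ / √(c + cos θ ^ 2)))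
    (continuous_arsinh.comp (continuous_cos.div_const _)).continuousOn
    (fun θ _ => hasDerivAt_arsinh_cos_div_sqrt hc θ)
    (fun θ hθ => neg_nonpos.2 <| div_nonneg
      (sin_nonneg_of_nonneg_of_le_pi hθ.1.le (by linarith [hθ.2, pi_pos])) (sqrt_nonneg _))
    (by positivity)
  simp only [cos_pi_div_two, zero_div, arsinh_zero, cos_zero, neg_smul, integral_neg, neg_inj] at key
  rw [intervalIntegral.integral_of_le (arsinh_nonneg_iff.2 (by positivity)),
    intervalIntegral.integral_of_le (by positivity),
    ← integral_Icc_eq_integral_Ioc, ← integral_Icc_eq_integral_Ioc, key]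

lemma sin_div_sqrt_mul_sinh_arsinh_cos_sq_eq {c θ : ℝ} (hc : 0 < c) (hθ : θ ∈ Ioc 0 (π / 2)) :
    sin θ / √(c + cos θ ^ 2) *
        (sinh (arsinh (cos θ / √c)) ^ 2 * (√(1 - c * sinh (arsinh (cos θ / √c)) ^ 2))⁻¹)
      = cos θ ^ 2 / (c * √(c + cos θ ^ 2)) := by
  have hsin : 0 < sin θ := sin_pos_of_pos_of_lt_pi hθ.1 (by linarith [hθ.2, pi_pos])
  have hsinh : sinh (arsinh (cos θ / √c)) ^ 2 = cos θ ^ 2 / c := by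
    rw [sinh_arsinh, div_pow, sq_sqrt hc.le]
  have hroot : √(1 - c * (cos θ ^ 2 / c)) = sin θ := by
    rw [mul_div_cancel₀ _ hc.ne', ← sin_sq, sqrt_sq hsin.le]
  rw [hsinh, hroot]
  field_simp

lemma one_sub_mul_sin_sq_pos {m : ℝ} (hm : m < 1) (θ : ℝ) : 0 < 1 - m * sin θ ^ 2 := by
  have h0 := sq_nonneg (sin θ)
  have h1 := sin_sq_le_one θ
  rcases le_or_gt m 0 with hm0 | hm0 <;> nlinarith

lemma cos_sq_div_eq_elliptic_integrands {ω : ℝ} (hω : 1 < ω) (θ : ℝ) :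
    cos θ ^ 2 / ((ω ^ 2 - 1) * √(ω ^ 2 - 1 + cos θ ^ 2))
      = ω / (ω ^ 2 - 1) * √(1 - 1 / ω ^ 2 * sin θ ^ 2)
        - 1 / ω * (√(1 - 1 / ω ^ 2 * sin θ ^ 2))⁻¹ := by
  have hm : 1 / ω ^ 2 < 1 := by rw [div_lt_one (by positivity)]; nlinarith
  set s := √(1 - 1 / ω ^ 2 * sin θ ^ 2)
  have hs_pos : 0 < s := sqrt_pos.2 (one_sub_mul_sin_sq_pos hm θ)
  have hs_sq : s ^ 2 = 1 - 1 / ω ^ 2 * sin θ ^ 2 := sq_sqrt (one_sub_mul_sin_sq_pos hm θ).le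
  have hroot : √(ω ^ 2 - 1 + cos θ ^ 2) = ω * s := by
    rw [← sqrt_sq (by positivity : 0 ≤ ω * s), mul_pow, hs_sq, cos_sq']
    congr 1
    field_simp
    ring
  have hc : ω ^ 2 - 1 ≠ 0 := by nlinarith
  rw [hroot]
  field_simp
  rw [hs_sq, cos_sq']
  field_simp
  ring

lemma integral_mul_sqrt_sub_mul_inv_sqrt {m : ℝ} (hm : m < 1) (a b : ℝ) :
    ∫ θ in (0 : ℝ)..π / 2, (a * √(1 - m * sin θ ^ 2) - b * (√(1 - m * sin θ ^ 2))⁻¹)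
      = a * ellE m - b * ellK m := by
  have hE : Continuous fun θ => √(1 - m * sin θ ^ 2) := by fun_prop
  have hK : Continuous fun θ => (√(1 - m * sin θ ^ 2))⁻¹ :=
    hE.inv₀ fun θ => (sqrt_pos.2 (one_sub_mul_sin_sq_pos hm θ)).ne'
  rw [intervalIntegral.integral_sub ((hE.intervalIntegrable _ _).const_mul a)
    ((hK.intervalIntegrable _ _).const_mul b), intervalIntegral.integral_const_mul,
    intervalIntegral.integral_const_mul, ellE, ellK]

/-- The conserved spin integral of the folded closed GKP string/stringy
membrane (after the overall factor ω) evaluates in terms of complete elliptic integrals. -/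
theorem gkp_spin_integral (ω : ℝ) (hω : 1 < ω) (ρ₀ : ℝ)
    (hρ₀ : ρ₀ = Real.arsinh (1 / Real.sqrt (ω ^ 2 - 1))) :
    ∫ ρ in (0:ℝ)..ρ₀,
        Real.sinh ρ ^ 2 * (Real.sqrt (1 - (ω ^ 2 - 1) * Real.sinh ρ ^ 2))⁻¹
      = (ω / (ω ^ 2 - 1)) * ellE (1 / ω ^ 2) - (1 / ω) * ellK (1 / ω ^ 2) := by
  have hc : 0 < ω ^ 2 - 1 := by nlinarith
  have hm : 1 / ω ^ 2 < 1 := by rw [div_lt_one (by positivity)]; nlinarith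
  rw [hρ₀, integral_zero_arsinh_one_div_sqrt_eq hc]
  calc _ = ∫ θ in (0 : ℝ)..π / 2, cos θ ^ 2 / ((ω ^ 2 - 1) * √(ω ^ 2 - 1 + cos θ ^ 2)) := by
        refine intervalIntegral.integral_congr_ae (.of_forall fun θ hθ => ?_)
        rw [uIoc_of_le (by positivity)] at hθ
        exact sin_div_sqrt_mul_sinh_arsinh_cos_sq_eq hc hθ
    _ = ∫ θ in (0 : ℝ)..π / 2, (ω / (ω ^ 2 - 1) * √(1 - 1 / ω ^ 2 * sin θ ^ 2)
          - 1 / ω * (√(1 - 1 / ω ^ 2 * sin θ ^ 2))⁻¹) :=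
        intervalIntegral.integral_congr fun θ _ => cos_sq_div_eq_elliptic_integrands hω θ
    _ = _ := integral_mul_sqrt_sub_mul_inv_sqrt hm _ _
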